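/- For each positive integer n, u_n^T (I_n − x·A_n)^* v_{n,1} = P_{n−1}(−x), where (I_n − xA_n)^* denotes the adjugate matrix, A_n is the unit-primitive matrix, u_n the all-ones vector, v_{n,1} the first unit vector, and P_m(x) = Σ_{k=0}^{m} (−1)^{⌊3k/2⌋} C(⌊(m+k)/2⌋,k) x^k with P_0 = 1. -/
import Mathlib


open Matrix

/-- The `n × n` unit-primitive matrix: entry `(i,j)` (1-based) is 1 iff `i + j ≤ n + 1`. -/
def A (n : ℕ) : Matrix (Fin n) (Fin n) ℝ :=
  Matrix.of fun i j => if (i : ℕ) + (j : ℕ) + 1 ≤ n then 1 else 0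

/-- The all-ones vector `u_n`. -/
def uvec (n : ℕ) : Fin n → ℝ := fun _ => 1

/-- The first standard basis vector `v_{n,1}`. -/
def v1 (n : ℕ) : Fin n → ℝ := fun i => if (i : ℕ) = 0 then 1 else 0

/-- `P_m(x) = ∑_{k=0}^{m} (−1)^{⌊3k/2⌋} C(⌊(m+k)/2⌋,k) x^k` (so `P_0 = 1`). -/
def P (m : ℕ) (x : ℝ) : ℝ :=
  ∑ k ∈ Finset.range (m + 1),
    (-1 : ℝ) ^ (3 * k / 2) * (Nat.choose ((m + k) / 2) k : ℝ) * x ^ k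

lemma sgn_succ (k : ℕ) : (-1:ℝ)^(3*(k+1)/2) = (-1)^(3*k/2) * (-1)^(k+1) := by
  rw [← pow_add]
  have h : (3*(k+1)/2) % 2 = (3*k/2 + (k+1)) % 2 := by
    rcases Nat.even_or_odd k with ⟨t, rfl⟩ | ⟨t, rfl⟩ <;> omega
  rw [neg_one_pow_eq_pow_mod_two, h, ← neg_one_pow_eq_pow_mod_two]

lemma P_ext (m N : ℕ) (h : m + 1 ≤ N) (x : ℝ) :
    P m x = ∑ k ∈ Finset.range N,
      (-1 : ℝ) ^ (3 * k / 2) * (Nat.choose ((m + k) / 2) k : ℝ) * x ^ k := by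
  rw [P]
  apply Finset.sum_subset
  · intro k hk; simp only [Finset.mem_range] at *; omega
  · intro k hk hk'
    simp only [Finset.mem_range] at *
    have : (m + k) / 2 < k := by omega
    rw [Nat.choose_eq_zero_of_lt this]
    simp

lemma Pkey (m : ℕ) (x : ℝ) : P (m+2) x = P m x - x * P (m+1) (-x) := by
  have hL : P (m+2) x = ∑ k ∈ Finset.range (m+3),
      (-1 : ℝ) ^ (3 * k / 2) * (Nat.choose ((m + 2 + k) / 2) k : ℝ) * x ^ k := rfl
  rw [hL, P_ext m (m+3) (by omega), P]
  rw [Finset.mul_sum]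
  have h2 : ∀ k ∈ Finset.range (m+2),
      x * ((-1 : ℝ) ^ (3 * k / 2) * (Nat.choose ((m + 1 + k) / 2) k : ℝ) * (-x) ^ k)
      = -((-1 : ℝ) ^ (3 * (k+1) / 2) * (Nat.choose ((m + 1 + k) / 2) k : ℝ) * x ^ (k+1)) := by
    intro k _
    rw [sgn_succ k, neg_pow, pow_succ]
    ring
  rw [Finset.sum_congr rfl h2, Finset.sum_neg_distrib, sub_neg_eq_add]
  rw [show m + 3 = (m + 2) + 1 from rfl, Finset.sum_range_succ' _ (m+2)]
  rw [Finset.sum_range_succ' _ (m+2)]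
  have key : ∀ k ∈ Finset.range (m+2),
      (-1:ℝ) ^ (3 * (k + 1) / 2) * ↑(((m + 2 + (k + 1)) / 2).choose (k + 1)) * x ^ (k + 1)
      = (-1) ^ (3 * (k + 1) / 2) * ↑(((m + (k + 1)) / 2).choose (k + 1)) * x ^ (k + 1)
        + (-1) ^ (3 * (k + 1) / 2) * ↑(((m + 1 + k) / 2).choose k) * x ^ (k + 1) := by
    intro k hk
    have hpas : (m + 2 + (k+1)) / 2 = (m + 1 + k) / 2 + 1 := by omega
    have hpas2 : (m + (k+1)) / 2 = (m + 1 + k) / 2 := by omega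
    rw [hpas, hpas2, Nat.choose_succ_succ' ((m+1+k)/2) k]
    push_cast
    ring
  rw [Finset.sum_congr rfl key, Finset.sum_add_distrib]
  norm_num
  ring

/-! ### auxiliary matrices -/

def Ap (s N : ℕ) : Matrix (Fin N) (Fin N) ℝ :=
  Matrix.of fun i j => if (i : ℕ) + (j : ℕ) + 1 ≤ s then 1 else 0

lemma Ap_self (n : ℕ) : Ap n n = A n := rfl

lemma entAp (s N : ℕ) (x : ℝ) (i j : Fin N) :
    ((1 : Matrix (Fin N) (Fin N) ℝ) - x • Ap s N) i j
      = (if (i:ℕ) = (j:ℕ) then 1 else 0) - x * (if (i:ℕ)+(j:ℕ)+1 ≤ s then 1 else 0) := by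
  simp [Ap, Matrix.sub_apply, Matrix.one_apply, Fin.ext_iff]

lemma det_pad (s : ℕ) (x : ℝ) (N : ℕ) (h : s ≤ N) :
    det ((1 : Matrix (Fin N) (Fin N) ℝ) - x • Ap s N)
      = det ((1 : Matrix (Fin s) (Fin s) ℝ) - x • Ap s s) := by
  induction N, h using Nat.le_induction with
  | base => rfl
  | succ K hK ih =>
    rw [← ih]
    rw [Matrix.det_succ_row _ (Fin.last K)]
    rw [Finset.sum_eq_single (Fin.last K)]
    · rw [entAp]
      have h1 : ((Fin.last K : Fin (K+1)):ℕ) = K := rfl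
      rw [h1]
      rw [if_pos rfl, if_neg (by omega)]
      have hsub : ((1 : Matrix (Fin (K+1)) (Fin (K+1)) ℝ) - x • Ap s (K+1)).submatrix
          (Fin.last K).succAbove (Fin.last K).succAbove
          = (1 : Matrix (Fin K) (Fin K) ℝ) - x • Ap s K := by
        ext i j
        rw [Fin.succAbove_last, Matrix.submatrix_apply, entAp, entAp]
        simp [Fin.ext_iff]
      rw [hsub]
      have hpow : (-1 : ℝ) ^ (K + K) = 1 := by
        rw [← two_mul, pow_mul]; norm_num
      rw [hpow]
      ring
    · intro j _ hj
      rw [entAp]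
      have h1 : ((Fin.last K : Fin (K+1)):ℕ) = K := rfl
      have hj' : (j:ℕ) ≠ K := by
        intro hc; exact hj (Fin.ext (by rw [hc]; rfl))
      rw [h1, if_neg (by omega), if_neg (by omega)]
      ring
    · intro h; exact absurd (Finset.mem_univ _) h

def Ush (m : ℕ) : Matrix (Fin (m+1)) (Fin (m+1)) ℝ :=
  Matrix.of fun i j => if (j:ℕ) = (i:ℕ)+1 then 1 else 0

def Lsh (m : ℕ) : Matrix (Fin m) (Fin m) ℝ :=
  Matrix.of fun i j => if (i:ℕ) = (j:ℕ)+1 then 1 else 0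

def Tlow (m : ℕ) : Matrix (Fin m) (Fin m) ℝ :=
  Matrix.of fun i j => if (j:ℕ) ≤ (i:ℕ) then 1 else 0

def Jam (m : ℕ) : Matrix (Fin m) (Fin m) ℝ :=
  Matrix.of fun i j => if (i:ℕ)+(j:ℕ)+2 = m+1 then 1 else 0

def Bam (m : ℕ) : Matrix (Fin m) (Fin m) ℝ :=
  Matrix.of fun i j => if m ≤ (i:ℕ)+(j:ℕ)+1 then 1 else 0

lemma Ush_mul (m : ℕ) (W : Matrix (Fin (m+1)) (Fin (m+1)) ℝ) (i j : Fin (m+1)) :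
    (Ush m * W) i j = if h : (i:ℕ)+1 < m+1 then W ⟨(i:ℕ)+1, h⟩ j else 0 := by
  rw [Matrix.mul_apply]
  split
  · next h =>
    rw [Finset.sum_eq_single (⟨(i:ℕ)+1, h⟩ : Fin (m+1))]
    · simp [Ush]
    · intro k _ hk
      have : (k:ℕ) ≠ (i:ℕ)+1 := fun hc => hk (Fin.ext hc)
      simp [Ush, this]
    · intro h; exact absurd (Finset.mem_univ _) h
  · next h =>
    apply Finset.sum_eq_zero; intro k _
    have : (k:ℕ) ≠ (i:ℕ)+1 := by have := k.isLt; omega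
    simp [Ush, this]

lemma Lsh_mul (m : ℕ) (W : Matrix (Fin m) (Fin m) ℝ) (i j : Fin m) :
    (Lsh m * W) i j = if h : 0 < (i:ℕ) then W ⟨(i:ℕ)-1, by omega⟩ j else 0 := by
  rw [Matrix.mul_apply]
  split
  · next h =>
    rw [Finset.sum_eq_single (⟨(i:ℕ)-1, by omega⟩ : Fin m)]
    · have hv : (i:ℕ) = (i:ℕ) - 1 + 1 := by omega
      simp only [Lsh, Matrix.of_apply]
      rw [if_pos (show (i:ℕ) = ((⟨(i:ℕ)-1, by omega⟩ : Fin m):ℕ) + 1 from hv)]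
      rw [one_mul]
    · intro k _ hk
      have hne : ¬((i:ℕ) = (k:ℕ)+1) := by
        intro hc; exact hk (Fin.ext (show (k:ℕ) = (i:ℕ)-1 by omega))
      simp [Lsh, hne]
    · intro h; exact absurd (Finset.mem_univ _) h
  · next h =>
    apply Finset.sum_eq_zero; intro k _
    have : (i:ℕ) ≠ (k:ℕ)+1 := by omega
    simp [Lsh, this]

lemma one_sub_Lsh_mul_Tlow (m : ℕ) : ((1 : Matrix (Fin m) (Fin m) ℝ) - Lsh m) * Tlow m = 1 := by
  ext i j
  rw [Matrix.sub_mul, Matrix.one_mul, Matrix.sub_apply, Lsh_mul]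
  have hi := i.isLt; have hj := j.isLt
  split
  · next h =>
    simp only [Tlow, Matrix.of_apply, Matrix.one_apply, Fin.ext_iff]
    split_ifs <;> simp_all <;> omega
  · next h =>
    simp only [Tlow, Matrix.of_apply, Matrix.one_apply, Fin.ext_iff]
    split_ifs <;> simp_all <;> omega

lemma Tlow_mul_Jam (m : ℕ) : Tlow m * Jam m = Bam m := by
  ext i j
  have hi := i.isLt; have hj := j.isLt
  rw [Matrix.mul_apply]
  rw [Finset.sum_eq_single (⟨m-1-(j:ℕ), by omega⟩ : Fin m)]
  · simp only [Tlow, Jam, Bam, Matrix.of_apply]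
    split_ifs <;> first | rfl | (exfalso; omega) | norm_num
  · intro k _ hk
    have hne : ¬((k:ℕ)+(j:ℕ)+2 = m+1) := by
      intro hc; exact hk (Fin.ext (show (k:ℕ) = m-1-(j:ℕ) by omega))
    simp only [Jam, Matrix.of_apply]
    rw [if_neg hne, mul_zero]
  · intro h; exact absurd (Finset.mem_univ _) h

lemma factor_lemma (m : ℕ) (x : ℝ) :
    ((1 : Matrix (Fin m) (Fin m) ℝ) - Lsh m) * (1 + x • Bam m)
      = 1 - Lsh m + x • Jam m := by
  rw [Matrix.mul_add, Matrix.mul_one, Matrix.mul_smul, ← Tlow_mul_Jam,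
    ← Matrix.mul_assoc, one_sub_Lsh_mul_Tlow, Matrix.one_mul]

lemma det_one_sub_Lsh (m : ℕ) : det ((1 : Matrix (Fin m) (Fin m) ℝ) - Lsh m) = 1 := by
  have h : ((1 : Matrix (Fin m) (Fin m) ℝ) - Lsh m).BlockTriangular OrderDual.toDual := by
    intro i j hij
    have hlt : (i:ℕ) < (j:ℕ) := hij
    simp only [Matrix.sub_apply, Matrix.one_apply, Lsh, Matrix.of_apply, Fin.ext_iff]
    rw [if_neg (by omega), if_neg (by omega), sub_zero]
  rw [Matrix.det_of_lowerTriangular _ h]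
  apply Finset.prod_eq_one
  intro i _
  simp only [Matrix.sub_apply, Matrix.one_apply_eq, Lsh, Matrix.of_apply]
  rw [if_neg (by omega), sub_zero]

lemma det_one_sub_Ush (m : ℕ) : det ((1 : Matrix (Fin (m+1)) (Fin (m+1)) ℝ) - Ush m) = 1 := by
  have h : ((1 : Matrix (Fin (m+1)) (Fin (m+1)) ℝ) - Ush m).BlockTriangular id := by
    intro i j hij
    have hlt : (j:ℕ) < (i:ℕ) := hij
    simp only [Matrix.sub_apply, Matrix.one_apply, Ush, Matrix.of_apply, Fin.ext_iff]
    rw [if_neg (by omega), if_neg (by omega), sub_zero]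
  rw [Matrix.det_of_upperTriangular h]
  apply Finset.prod_eq_one
  intro i _
  simp only [Matrix.sub_apply, Matrix.one_apply_eq, Ush, Matrix.of_apply]
  rw [if_neg (by omega), sub_zero]

lemma det_rev (m : ℕ) (x : ℝ) :
    det ((1 : Matrix (Fin m) (Fin m) ℝ) + x • Bam m)
      = det ((1 : Matrix (Fin m) (Fin m) ℝ) + x • A m) := by
  rw [← Matrix.det_submatrix_equiv_self Fin.revPerm ((1 : Matrix (Fin m) (Fin m) ℝ) + x • A m)]
  congr 1
  ext i j
  have hi := i.isLt; have hj := j.isLt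
  simp only [Matrix.submatrix_apply, Matrix.add_apply, Matrix.smul_apply, Matrix.one_apply,
    A, Bam, Matrix.of_apply, smul_eq_mul, Fin.revPerm_apply, Fin.ext_iff, Fin.val_rev]
  split_ifs <;> simp_all <;> omega

lemma Gchain (m : ℕ) (x : ℝ) :
    det (((1 : Matrix (Fin (m+1)) (Fin (m+1)) ℝ) - x • A (m+1)).updateCol 0 (fun _ => 1))
      = det ((1 : Matrix (Fin m) (Fin m) ℝ) + x • A m) := by
  set C : Matrix (Fin (m+1)) (Fin (m+1)) ℝ :=
    ((1 : Matrix (Fin (m+1)) (Fin (m+1)) ℝ) - x • A (m+1)).updateCol 0 (fun _ => 1) with hC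
  have hC0 : ∀ k : Fin (m+1), C k 0 = 1 := by
    intro k
    rw [hC, Matrix.updateCol_apply, if_pos rfl]
  have hCe : ∀ (a b : Fin (m+1)), b ≠ 0 →
      C a b = (if (a:ℕ) = (b:ℕ) then 1 else 0)
        - x * (if (a:ℕ)+(b:ℕ)+1 ≤ m+1 then 1 else 0) := by
    intro a b hb
    rw [hC, Matrix.updateCol_apply, if_neg hb]
    simp [A, Matrix.sub_apply, Matrix.one_apply, Fin.ext_iff]
  have h1 : det C = det (((1 : Matrix (Fin (m+1)) (Fin (m+1)) ℝ) - Ush m) * C) := by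
    rw [Matrix.det_mul, det_one_sub_Ush, one_mul]
  rw [h1, Matrix.det_succ_column_zero]
  rw [Finset.sum_eq_single (Fin.last m)]
  · have hval : (((1 : Matrix (Fin (m+1)) (Fin (m+1)) ℝ) - Ush m) * C) (Fin.last m) 0 = 1 := by
      rw [Matrix.sub_mul, Matrix.one_mul, Matrix.sub_apply, Ush_mul]
      rw [dif_neg (by simp), hC0, sub_zero]
    rw [hval, mul_one]
    have hsub : (((1 : Matrix (Fin (m+1)) (Fin (m+1)) ℝ) - Ush m) * C).submatrix
        (Fin.last m).succAbove Fin.succ = -(1 - Lsh m + x • Jam m) := by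
      ext i j
      rw [Fin.succAbove_last, Matrix.submatrix_apply]
      rw [Matrix.sub_mul, Matrix.one_mul, Matrix.sub_apply, Ush_mul]
      rw [dif_pos (show ((Fin.castSucc i :ℕ))+1 < m+1 by simp only [Fin.coe_castSucc]; omega)]
      have e1 : C (Fin.castSucc i) (Fin.succ j)
          = (if (i:ℕ) = (j:ℕ)+1 then 1 else 0)
            - x * (if (i:ℕ)+(j:ℕ)+2 ≤ m+1 then 1 else 0) := by
        rw [hCe _ _ (Fin.succ_ne_zero j)]
        simp only [Fin.coe_castSucc, Fin.val_succ,
          show ((i:ℕ) + ((j:ℕ)+1) + 1 ≤ m+1) ↔ ((i:ℕ)+(j:ℕ)+2 ≤ m+1) from by omega]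
      have e2 : C ⟨(Fin.castSucc i :ℕ)+1, by simp only [Fin.coe_castSucc]; omega⟩ (Fin.succ j)
          = (if (i:ℕ) = (j:ℕ) then 1 else 0)
            - x * (if (i:ℕ)+(j:ℕ)+3 ≤ m+1 then 1 else 0) := by
        rw [hCe _ _ (Fin.succ_ne_zero j)]
        simp only [Fin.coe_castSucc, Fin.val_succ,
          show ((i:ℕ)+1 = (j:ℕ)+1) ↔ ((i:ℕ) = (j:ℕ)) from by omega,
          show ((i:ℕ) + 1 + ((j:ℕ)+1) + 1 ≤ m+1) ↔ ((i:ℕ)+(j:ℕ)+3 ≤ m+1) from by omega]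
      rw [e1, e2]
      simp only [Matrix.neg_apply, Matrix.add_apply, Matrix.sub_apply, Matrix.smul_apply,
        Matrix.one_apply, Lsh, Jam, Matrix.of_apply, Fin.ext_iff, smul_eq_mul]
      have hi := i.isLt; have hj := j.isLt
      split_ifs <;> first | ring1 | (exfalso; omega)
    rw [hsub, Matrix.det_neg, Fintype.card_fin]
    rw [← factor_lemma m x, Matrix.det_mul, det_one_sub_Lsh, one_mul, det_rev]
    have hlast : ((Fin.last m : Fin (m+1)):ℕ) = m := rfl
    rw [hlast, ← mul_assoc, ← pow_add, ← two_mul, pow_mul]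
    norm_num
  · intro i _ hi
    have hval : (((1 : Matrix (Fin (m+1)) (Fin (m+1)) ℝ) - Ush m) * C) i 0 = 0 := by
      rw [Matrix.sub_mul, Matrix.one_mul, Matrix.sub_apply, Ush_mul]
      have hilt : (i:ℕ)+1 < m+1 := by
        have := i.isLt
        have : (i:ℕ) ≠ m := fun hc => hi (Fin.ext (by rw [hc]; rfl))
        omega
      rw [dif_pos hilt, hC0, hC0, sub_self]
    rw [hval]
    ring
  · intro h; exact absurd (Finset.mem_univ _) h

lemma detA : ∀ (n : ℕ) (x : ℝ), det ((1 : Matrix (Fin n) (Fin n) ℝ) - x • A n) = P n x := by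
  intro n
  induction n using Nat.strong_induction_on with
  | _ n ih =>
    match n, ih with
    | 0, _ => intro x; rw [Matrix.det_fin_zero]; simp [P]
    | 1, _ =>
      intro x
      rw [Matrix.det_fin_one]
      simp [A, P, Finset.sum_range_succ, Matrix.sub_apply, Matrix.one_apply]
      norm_num
      ring
    | (m+2), ih =>
      intro x
      set M : Matrix (Fin (m+2)) (Fin (m+2)) ℝ := 1 - x • A (m+2) with hM
      have hMe : ∀ i j : Fin (m+2),
          M i j = (if (i:ℕ) = (j:ℕ) then 1 else 0)
            - x * (if (i:ℕ)+(j:ℕ)+1 ≤ m+2 then 1 else 0) := by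
        intro i j
        simp [hM, A, Matrix.sub_apply, Matrix.one_apply, Fin.ext_iff]
      have h0 : M = M.updateCol 0
          (Pi.single (0 : Fin (m+2)) (1:ℝ) + (-x) • (fun _ => (1:ℝ))) := by
        rw [show (Pi.single (0 : Fin (m+2)) (1:ℝ) + (-x) • (fun _ => (1:ℝ)))
            = (fun i => M i 0) from ?_, Matrix.updateCol_eq_self]
        funext i
        rw [hMe]
        have hi := i.isLt
        simp only [Pi.add_apply, Pi.smul_apply, Pi.single_apply, smul_eq_mul, Fin.ext_iff,
          show ((0 : Fin (m+2)):ℕ) = 0 from rfl]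
        split_ifs <;> first | ring1 | (exfalso; omega)
      nth_rewrite 1 [h0]
      rw [Matrix.det_updateCol_add, Matrix.det_updateCol_smul]
      have hfirst : (M.updateCol 0 (Pi.single (0 : Fin (m+2)) (1:ℝ))).det = P m x := by
        rw [Matrix.det_succ_column_zero, Finset.sum_eq_single (0 : Fin (m+2))]
        · rw [Matrix.updateCol_apply, if_pos rfl]
          have hsub : (M.updateCol 0 (Pi.single (0 : Fin (m+2)) (1:ℝ))).submatrix
              (0 : Fin (m+2)).succAbove Fin.succ
              = (1 : Matrix (Fin (m+1)) (Fin (m+1)) ℝ) - x • Ap m (m+1) := by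
            ext i j
            rw [Fin.succAbove_zero, Matrix.submatrix_apply,
              Matrix.updateCol_apply, if_neg (Fin.succ_ne_zero j), hMe, entAp]
            simp only [Fin.val_succ,
              show ((i:ℕ)+1 = (j:ℕ)+1) ↔ ((i:ℕ) = (j:ℕ)) from by omega,
              show ((i:ℕ)+1 + ((j:ℕ)+1) + 1 ≤ m+2) ↔ ((i:ℕ)+(j:ℕ)+1 ≤ m) from by omega]
          rw [hsub, det_pad m x (m+1) (by omega), Ap_self, ih m (by omega) x]
          simp [Pi.single_apply]
        · intro i _ hi
          rw [Matrix.updateCol_apply, if_pos rfl]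
          simp [Pi.single_apply, hi]
        · intro h; exact absurd (Finset.mem_univ _) h
      have hsecond : (M.updateCol 0 (fun _ => (1:ℝ))).det = P (m+1) (-x) := by
        rw [hM]
        rw [show m + 2 = (m+1)+1 from rfl] at *
        rw [Gchain (m+1) x]
        rw [show (1 : Matrix (Fin (m+1)) (Fin (m+1)) ℝ) + x • A (m+1)
            = 1 - (-x) • A (m+1) by rw [neg_smul, sub_neg_eq_add]]
        exact ih (m+1) (by omega) (-x)
      rw [hfirst, hsecond, Pkey]
      ring

/-- For each positive integer `n` and all real `x`:
`u_n^T (I_n − x·A_n)^* v_{n,1} = P_{n−1}(−x)`, where `M^*` is the adjugate of `M`. -/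
theorem adjugate_sum_first_column (n : ℕ) (hn : 0 < n) (x : ℝ) :
    uvec n ⬝ᵥ (Matrix.adjugate ((1 : Matrix (Fin n) (Fin n) ℝ) - x • A n)).mulVec (v1 n) =
      P (n - 1) (-x) := by
  obtain ⟨m, rfl⟩ : ∃ m, n = m + 1 := ⟨n - 1, by omega⟩
  set M : Matrix (Fin (m+1)) (Fin (m+1)) ℝ := 1 - x • A (m+1) with hM
  have hMsymm : Mᵀ = M := by
    ext i j
    simp only [Matrix.transpose_apply, hM, Matrix.sub_apply, Matrix.smul_apply, Matrix.one_apply,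
      A, Matrix.of_apply, smul_eq_mul]
    rw [show (j:ℕ)+(i:ℕ) = (i:ℕ)+(j:ℕ) from Nat.add_comm _ _]
    congr 1
    simp [eq_comm]
  have step1 : uvec (m+1) ⬝ᵥ (Matrix.adjugate M).mulVec (v1 (m+1))
      = ∑ i, Matrix.adjugate M i 0 := by
    simp only [dotProduct, uvec, one_mul, Matrix.mulVec, v1]
    apply Finset.sum_congr rfl
    intro i _
    simp only [mul_ite, mul_one, mul_zero]
    rw [Finset.sum_eq_single (0 : Fin (m+1))]
    · simp
    · intro b _ hb
      exact if_neg (fun hc => hb (Fin.ext hc))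
    · intro h; exact absurd (Finset.mem_univ _) h
  have step2 : ∑ i, Matrix.adjugate M i 0 = (M.updateRow 0 (fun _ => (1:ℝ))).det := by
    have h : ∀ i : Fin (m+1), Matrix.adjugate M i 0
        = Matrix.cramer Mᵀ (Pi.single i 1) 0 := by
      intro i
      rw [Matrix.adjugate_apply, ← Matrix.cramer_transpose_apply]
    simp_rw [h]
    rw [← Finset.sum_apply, ← map_sum (Matrix.cramer Mᵀ)]
    rw [show (∑ i, Pi.single i (1:ℝ) : Fin (m+1) → ℝ) = fun _ => (1:ℝ) from
      Finset.univ_sum_single _]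
    rw [Matrix.cramer_transpose_apply]
  have step3 : (M.updateRow 0 (fun _ => (1:ℝ))).det
      = (M.updateCol 0 (fun _ => (1:ℝ))).det := by
    conv_lhs => rw [← hMsymm]
    rw [Matrix.updateRow_transpose, Matrix.det_transpose]
  rw [step1, step2, step3, hM, Gchain m x]
  rw [show (1 : Matrix (Fin m) (Fin m) ℝ) + x • A m
      = 1 - (-x) • A m by rw [neg_smul, sub_neg_eq_add]]
  rw [detA m (-x)]
  simp
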